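/- Let (aₙ)ₙ≥₁ be positive reals and (bₙ)ₙ≥₁ reals with supₙ(aₙ + |bₙ|) < ∞, and let J be the bounded self-adjoint operator on ℓ²(ℕ₊) given by (Ju)ₙ = aₙ uₙ₊₁ + bₙ uₙ + aₙ₋₁ uₙ₋₁ (with the convention a₀ u₀ = 0). Then for reals a₋ ≤ a₊ the following are equivalent: (i) a₋‖u‖² ≤ ⟨u, Ju⟩ ≤ a₊‖u‖² for all u ∈ ℓ²(ℕ₊); (ii) for every ℓ ≥ 1, P_ℓ(a₊) > 0 and (−1)^ℓ P_ℓ(a₋) > 0. -/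
import Mathlib


open Matrix Set

/-- The n×n Jacobi matrix with diagonal entries b₁,…,bₙ and off-diagonal entries a₁,…,aₙ₋₁. -/
def jacobiMatrix (a b : ℕ → ℝ) (n : ℕ) : Matrix (Fin n) (Fin n) ℝ :=
  Matrix.of fun i j =>
    if (i : ℕ) = (j : ℕ) then b ((i : ℕ) + 1)
    else if (i : ℕ) + 1 = (j : ℕ) then a ((i : ℕ) + 1)
    else if (j : ℕ) + 1 = (i : ℕ) then a ((j : ℕ) + 1)
    else 0

/-- Shifted orthonormal polynomials: `opoly a b 0 = p₋₁ = 0`, `opoly a b 1 = p₀ = 1`, and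
`opoly a b (n+1) = pₙ`, where `aₙ₊₁ pₙ₊₁(E) + (bₙ₊₁ − E) pₙ(E) + aₙ pₙ₋₁(E) = 0`. -/
noncomputable def opoly (a b : ℕ → ℝ) : ℕ → ℝ → ℝ
  | 0 => fun _ => 0
  | 1 => fun _ => 1
  | n + 2 => fun E => ((E - b (n + 1)) * opoly a b (n + 1) E - a n * opoly a b n E) / a (n + 1)

/-- The monic orthogonal polynomials `Pₙ(E) = (a₁⋯aₙ) pₙ(E)`. -/
noncomputable def monicP (a b : ℕ → ℝ) (n : ℕ) (E : ℝ) : ℝ :=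
  (∏ k ∈ Finset.Icc 1 n, a k) * opoly a b (n + 1) E

/-- `E` is an eigenvalue of the real matrix `M`. -/
def IsEigenvalue {n : ℕ} (M : Matrix (Fin n) (Fin n) ℝ) (E : ℝ) : Prop :=
  ∃ v : Fin n → ℝ, v ≠ 0 ∧ M.mulVec v = E • v

namespace Jaux

variable {a b : ℕ → ℝ}

lemma monicP_zero (E : ℝ) : monicP a b 0 E = 1 := by simp [monicP, opoly]

lemma monicP_one (ha1 : a 1 ≠ 0) (E : ℝ) : monicP a b 1 E = E - b 1 := by
  simp [monicP, opoly]; field_simp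

lemma monicP_rec (ha : ∀ n, 1 ≤ n → 0 < a n) (m : ℕ) (E : ℝ) :
    monicP a b (m + 2) E
      = (E - b (m + 2)) * monicP a b (m + 1) E - (a (m + 1)) ^ 2 * monicP a b m E := by
  have h1 : a (m + 1) ≠ 0 := (ha _ (by omega)).ne'
  have h2 : a (m + 2) ≠ 0 := (ha _ (by omega)).ne'
  have hprod : (∏ k ∈ Finset.Icc 1 (m + 1), a k) = (∏ k ∈ Finset.Icc 1 m, a k) * a (m + 1) :=
    Finset.prod_Icc_succ_top (by omega) a
  simp only [monicP]
  rw [Finset.prod_Icc_succ_top (by omega) a, hprod]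
  rw [show opoly a b (m + 2 + 1) = opoly a b ((m + 1) + 2) from rfl]
  simp only [opoly]
  field_simp

lemma opoly_succ2 (a b : ℕ → ℝ) (n : ℕ) (E : ℝ) :
    opoly a b (n + 2) E
      = ((E - b (n + 1)) * opoly a b (n + 1) E - a n * opoly a b n E) / a (n + 1) := rfl

lemma opoly_neg (ha : ∀ n, 1 ≤ n → 0 < a n) (E : ℝ) :
    ∀ n, opoly a (fun k => -b k) (n + 1) (-E) = (-1 : ℝ) ^ n * opoly a b (n + 1) E := by
  intro n
  induction n using Nat.twoStepInduction with
  | zero => simp [opoly]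
  | one =>
    show opoly a (fun k => -b k) 2 (-E) = _
    rw [opoly_succ2, opoly_succ2]
    simp [opoly]; ring
  | more n ih1 ih2 =>
    show opoly a (fun k => -b k) (n + 3) (-E) = _
    rw [show (n + 3) = (n + 1) + 2 from rfl, opoly_succ2 a (fun k => -b k) (n + 1) (-E),
      ih2, ih1, opoly_succ2 a b (n + 1) E]
    have h1 : a (n + 1) ≠ 0 := (ha _ (by omega)).ne'
    have h2 : a (n + 2) ≠ 0 := (ha _ (by omega)).ne'
    field_simp
    ring

lemma monicP_neg (ha : ∀ n, 1 ≤ n → 0 < a n) (n : ℕ) (E : ℝ) :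
    monicP a (fun k => -b k) n (-E) = (-1 : ℝ) ^ n * monicP a b n E := by
  simp only [monicP, opoly_neg ha]; ring

/-- The truncated quadratic form `∑_{k<n} ((E - b_{k+1}) v_k^2 - 2 a_{k+1} v_k v_{k+1})`. -/
noncomputable def G (a b : ℕ → ℝ) (E : ℝ) (n : ℕ) (v : ℕ → ℝ) : ℝ :=
  ∑ k ∈ Finset.range n, ((E - b (k + 1)) * v k ^ 2 - 2 * a (k + 1) * v k * v (k + 1))

lemma G_succ (E : ℝ) (n : ℕ) (v : ℕ → ℝ) :
    G a b E (n + 1) v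
      = G a b E n v + ((E - b (n + 1)) * v n ^ 2 - 2 * a (n + 1) * v n * v (n + 1)) :=
  Finset.sum_range_succ _ _

lemma sos (ha : ∀ n, 1 ≤ n → 0 < a n) (E : ℝ) :
    ∀ n, 1 ≤ n → (∀ k, 1 ≤ k → k ≤ n → 0 < monicP a b k E) → ∀ v : ℕ → ℝ,
      0 ≤ G a b E n v + (a n) ^ 2 * (monicP a b (n - 1) E / monicP a b n E) * v n ^ 2 := by
  intro n hn
  induction n, hn using Nat.le_induction with
  | base =>
    intro hP v
    have h1 : 0 < monicP a b 1 E := hP 1 le_rfl le_rfl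
    have hb1 : monicP a b 1 E = E - b 1 := monicP_one (ha 1 le_rfl).ne' E
    have key : G a b E 1 v + (a 1) ^ 2 * (monicP a b 0 E / monicP a b 1 E) * v 1 ^ 2
        = ((E - b 1) * v 0 - a 1 * v 1) ^ 2 / monicP a b 1 E := by
      have h0 : E - b 1 ≠ 0 := by rw [← hb1]; exact h1.ne'
      simp only [G, Finset.sum_range_one, monicP_zero, hb1]
      field_simp
      ring
    rw [key]
    positivity
  | succ n hn ih =>
    intro hP v
    have hPn : 0 < monicP a b n E := hP n hn (by omega)
    have hPn1 : 0 < monicP a b (n + 1) E := hP (n + 1) (by omega) le_rfl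
    have ihv := ih (fun k h1 h2 => hP k h1 (by omega)) v
    rw [G_succ]
    have hrec : monicP a b (n + 1) E
        = (E - b (n + 1)) * monicP a b n E - (a n) ^ 2 * monicP a b (n - 1) E := by
      obtain ⟨m, rfl⟩ : ∃ m, n = m + 1 := ⟨n - 1, by omega⟩
      simpa using monicP_rec ha m E
    have key : ((E - b (n + 1)) * v n ^ 2 - 2 * a (n + 1) * v n * v (n + 1))
          + (a (n + 1)) ^ 2 * (monicP a b (n + 1 - 1) E / monicP a b (n + 1) E) * v (n + 1) ^ 2
        = (monicP a b (n + 1) E * v n - a (n + 1) * monicP a b n E * v (n + 1)) ^ 2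
            / (monicP a b n E * monicP a b (n + 1) E)
          + (a n) ^ 2 * (monicP a b (n - 1) E / monicP a b n E) * v n ^ 2 := by
      simp only [Nat.add_sub_cancel]
      have hEb : E - b (n + 1)
          = (monicP a b (n + 1) E + (a n) ^ 2 * monicP a b (n - 1) E) / monicP a b n E := by
        rw [eq_div_iff hPn.ne', hrec]; ring
      rw [hEb]
      field_simp
      ring
    have sq0 : 0 ≤ (monicP a b (n + 1) E * v n - a (n + 1) * monicP a b n E * v (n + 1)) ^ 2
            / (monicP a b n E * monicP a b (n + 1) E) := by positivity
    linarith [key, ihv, sq0]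

/-- Lemma A: if all monic polynomials are positive at `E`, the truncated form is nonneg. -/
lemma G_nonneg (ha : ∀ n, 1 ≤ n → 0 < a n) (E : ℝ)
    (hP : ∀ ℓ, 1 ≤ ℓ → 0 < monicP a b ℓ E) (n : ℕ) (v : ℕ → ℝ) (hv : v n = 0) :
    0 ≤ G a b E n v := by
  rcases Nat.eq_zero_or_pos n with rfl | hn
  · simp [G]
  · have := sos ha E n hn (fun k h1 _ => hP k h1) v
    rw [hv] at this
    simpa using this

/-- Lemma B: if the form is nonneg on finitely supported vectors, monic polys are positive. -/
lemma monicP_pos_of_G_nonneg (ha : ∀ n, 1 ≤ n → 0 < a n) (E : ℝ)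
    (hG : ∀ (n : ℕ) (v : ℕ → ℝ), (∀ j, n ≤ j → v j = 0) → 0 ≤ G a b E n v) :
    ∀ ℓ, 1 ≤ ℓ → 0 < monicP a b ℓ E := by
  intro ℓ
  induction ℓ using Nat.strong_induction_on with
  | _ ℓ ih =>
  intro hℓ
  obtain ⟨m, rfl⟩ : ∃ m, ℓ = m + 1 := ⟨ℓ - 1, by omega⟩
  have hPk : ∀ k, k ≤ m → 0 < monicP a b k E := by
    intro k hk
    rcases Nat.eq_zero_or_pos k with rfl | hk1
    · rw [monicP_zero]; norm_num
    · exact ih k (by omega) hk1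
  set v : ℕ → ℝ := fun k =>
    if k ≤ m then (∏ j ∈ Finset.Icc (k + 1) m, a j) * monicP a b k E / monicP a b m E
    else 0 with hv
  have hvm : v m = 1 := by
    simp [hv, div_self (hPk m le_rfl).ne']
  have hv0 : ∀ j, m + 1 ≤ j → v j = 0 := by
    intro j hj; simp [hv, Nat.lt_irrefl]; omega
  have hrel : ∀ k, k + 1 ≤ m →
      monicP a b (k + 1) E * v k = a (k + 1) * monicP a b k E * v (k + 1) := by
    intro k hk
    have h1 : v k = (∏ j ∈ Finset.Icc (k + 1) m, a j) * monicP a b k E / monicP a b m E := by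
      simp [hv]; omega
    have h2 : v (k + 1) = (∏ j ∈ Finset.Icc (k + 2) m, a j) * monicP a b (k + 1) E
        / monicP a b m E := by simp [hv]; omega
    have hsplit : (∏ j ∈ Finset.Icc (k + 1) m, a j)
        = a (k + 1) * ∏ j ∈ Finset.Icc (k + 2) m, a j := by
      rw [← Finset.Ico_add_one_right_eq_Icc, ← Finset.Ico_add_one_right_eq_Icc]
      exact Finset.prod_eq_prod_Ico_succ_bot (by omega) a
    rw [h1, h2, hsplit]
    field_simp
  have hGn : ∀ n, 1 ≤ n → n ≤ m →
      G a b E n v = -((a n) ^ 2 * (monicP a b (n - 1) E / monicP a b n E) * v n ^ 2) := by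
    intro n hn
    induction n, hn using Nat.le_induction with
    | base =>
      intro h1m
      have hb1 : monicP a b 1 E = E - b 1 := monicP_one (ha 1 le_rfl).ne' E
      have hr := hrel 0 h1m
      rw [monicP_zero, hb1] at hr
      simp only [G, Finset.sum_range_one, monicP_zero, Nat.sub_self, hb1]
      have h1 : (0:ℝ) < E - b 1 := hb1 ▸ ih 1 (by omega) le_rfl
      field_simp
      nlinarith [hr]
    | succ n hn ihn =>
      intro hnm
      have hPn := hPk n (by omega)
      have hPn1 := hPk (n + 1) (by omega)
      have hrec : monicP a b (n + 1) E
          = (E - b (n + 1)) * monicP a b n E - (a n) ^ 2 * monicP a b (n - 1) E := by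
        obtain ⟨j, rfl⟩ : ∃ j, n = j + 1 := ⟨n - 1, by omega⟩
        simpa using monicP_rec ha j E
      have hr := hrel n hnm
      rw [G_succ, ihn (by omega)]
      simp only [Nat.add_sub_cancel]
      have hEb : E - b (n + 1)
          = (monicP a b (n + 1) E + (a n) ^ 2 * monicP a b (n - 1) E) / monicP a b n E := by
        rw [eq_div_iff hPn.ne', hrec]; ring
      rw [hEb]
      have hvn : v n = a (n + 1) * monicP a b n E * v (n + 1) / monicP a b (n + 1) E := by
        rw [eq_div_iff hPn1.ne']; linarith [hr]
      rw [hvn]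
      field_simp
      ring
  have hGm1 : G a b E (m + 1) v = monicP a b (m + 1) E / monicP a b m E := by
    rcases Nat.eq_zero_or_pos m with rfl | hm
    · have hb1 : monicP a b 1 E = E - b 1 := monicP_one (ha 1 le_rfl).ne' E
      simp [G, hvm, hv0 1 le_rfl, hb1, monicP_zero]
    · rw [G_succ, hGn m hm le_rfl, hvm, hv0 (m + 1) le_rfl]
      have hPm := hPk m le_rfl
      have hPm1 := hPk (m - 1) (by omega)
      have hrec : monicP a b (m + 1) E
          = (E - b (m + 1)) * monicP a b m E - (a m) ^ 2 * monicP a b (m - 1) E := by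
        obtain ⟨j, rfl⟩ : ∃ j, m = j + 1 := ⟨m - 1, by omega⟩
        simpa using monicP_rec ha j E
      rw [hrec]
      field_simp
      ring
  have hq : 0 ≤ monicP a b (m + 1) E / monicP a b m E := by
    rw [← hGm1]; exact hG (m + 1) v hv0
  have hpert : ∀ t : ℝ, 0 ≤ (E - b (m + 2)) * (t * t) + (-(2 * a (m + 1))) * t
      + monicP a b (m + 1) E / monicP a b m E := by
    intro t
    set w : ℕ → ℝ := fun k => if k = m + 1 then t else v k with hw
    have hw0 : ∀ j, m + 2 ≤ j → w j = 0 := by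
      intro j hj
      simp only [hw]
      rw [if_neg (by omega), hv0 j (by omega)]
    have := hG (m + 2) w hw0
    have hGw : G a b E (m + 2) w = G a b E (m + 1) v
        + ((E - b (m + 2)) * t ^ 2 - 2 * a (m + 1) * t) := by
      rw [G_succ, G_succ, G_succ (n := m) (v := v)]
      have e1 : ∀ k, k ≤ m → w k = v k := by intro k hk; simp [hw]; omega
      have e2 : w (m + 1) = t := by simp [hw]
      have e3 : w (m + 2) = 0 := hw0 (m + 2) le_rfl
      have e4 : G a b E m w = G a b E m v := by
        apply Finset.sum_congr rfl
        intro k hk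
        simp only [Finset.mem_range] at hk
        rw [e1 k (by omega), e1 (k + 1) (by omega)]
      rw [e4, e1 m le_rfl, e2, e3, hvm, hv0 (m + 1) le_rfl]
      ring
    rw [hGw, hGm1] at this
    nlinarith [this]
  have hq' : 0 < monicP a b (m + 1) E / monicP a b m E := by
    rcases eq_or_lt_of_le hq with heq | h; swap
    · exact h
    · exfalso
      have hd := discrim_le_zero hpert
      rw [discrim, ← heq] at hd
      have := ha (m + 1) (by omega)
      nlinarith [hd]
  have hPm := hPk m le_rfl
  calc (0:ℝ) < (monicP a b (m + 1) E / monicP a b m E) * monicP a b m E := by positivity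
  _ = monicP a b (m + 1) E := by field_simp

noncomputable def diagB (b : ℕ → ℝ) (n : ℕ) (v : ℕ → ℝ) : ℝ :=
  ∑ k ∈ Finset.range n, b (k + 1) * v k ^ 2

noncomputable def cross (a : ℕ → ℝ) (n : ℕ) (v : ℕ → ℝ) : ℝ :=
  ∑ k ∈ Finset.range n, a (k + 1) * v k * v (k + 1)

noncomputable def Tf (a b : ℕ → ℝ) (u : ℕ → ℝ) (n : ℕ) : ℝ :=
  ∑ k ∈ Finset.range n, u k * (a (k + 1) * u (k + 1) + b (k + 1) * u k +
    if k = 0 then 0 else a k * u (k - 1))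

lemma bridge1 (E : ℝ) (n : ℕ) (v : ℕ → ℝ) :
    G a b E n v = E * (∑ k ∈ Finset.range n, v k ^ 2) - (diagB b n v + 2 * cross a n v) := by
  simp only [G, diagB, cross, Finset.mul_sum, ← Finset.sum_add_distrib, ← Finset.sum_sub_distrib]
  exact Finset.sum_congr rfl fun k _ => by ring

lemma bridge2 (E : ℝ) (n : ℕ) (v : ℕ → ℝ) :
    G a (fun k => -b k) (-E) n (fun k => (-1 : ℝ) ^ k * v k)
      = (diagB b n v + 2 * cross a n v) - E * (∑ k ∈ Finset.range n, v k ^ 2) := by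
  simp only [G, diagB, cross, Finset.mul_sum, ← Finset.sum_add_distrib, ← Finset.sum_sub_distrib]
  refine Finset.sum_congr rfl fun k _ => ?_
  beta_reduce
  rw [pow_succ (-1 : ℝ) k]
  set s : ℝ := (-1 : ℝ) ^ k with hsdef
  have hs : s ^ 2 = 1 := by
    rw [hsdef, ← pow_mul, mul_comm, pow_mul, neg_one_sq, one_pow]
  clear_value s
  linear_combination ((-E + b (k + 1)) * v k ^ 2 + 2 * a (k + 1) * v k * v (k + 1)) * hs

lemma Tf_eq (u : ℕ → ℝ) : ∀ n, Tf a b u n = diagB b n u + cross a n u + cross a (n - 1) u := by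
  intro n
  induction n with
  | zero => simp [Tf, diagB, cross]
  | succ n ih =>
    have hT : Tf a b u (n + 1) = Tf a b u n + u n * (a (n + 1) * u (n + 1) + b (n + 1) * u n +
        if n = 0 then 0 else a n * u (n - 1)) := Finset.sum_range_succ _ _
    have hD : diagB b (n + 1) u = diagB b n u + b (n + 1) * u n ^ 2 := Finset.sum_range_succ _ _
    have hX : cross a (n + 1) u = cross a n u + a (n + 1) * u n * u (n + 1) :=
      Finset.sum_range_succ _ _
    rcases Nat.eq_zero_or_pos n with rfl | hn
    · simp only [hT, hD, hX, ih]; norm_num [cross]; ring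
    · obtain ⟨j, rfl⟩ : ∃ j, n = j + 1 := ⟨n - 1, by omega⟩
      have hX2 : cross a (j + 1) u = cross a j u + a (j + 1) * u j * u (j + 1) :=
        Finset.sum_range_succ _ _
      simp only [hT, hD, hX, ih, Nat.add_sub_cancel, hX2]
      rw [if_neg (by omega)]
      ring

lemma rpow_two_helper (x : ℝ) : x ^ (2 : ℝ) = x ^ (2 : ℕ) := by
  rw [show (2:ℝ) = ((2:ℕ):ℝ) by norm_num, Real.rpow_natCast]

lemma summable_sq (u : lp (fun _ : ℕ => ℝ) 2) : Summable (fun k => (u k : ℝ) ^ 2) := by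
  have h := (lp.memℓp u).summable (p := 2) (by norm_num)
  simp only [ENNReal.toReal_ofNat, Real.norm_eq_abs, rpow_two_helper, sq_abs] at h
  exact h

lemma norm_sq_eq (u : lp (fun _ : ℕ => ℝ) 2) : ‖u‖ ^ 2 = ∑' k, (u k : ℝ) ^ 2 := by
  have h := lp.norm_rpow_eq_tsum (p := 2) (by norm_num) u
  simp only [ENNReal.toReal_ofNat, Real.norm_eq_abs, rpow_two_helper, sq_abs] at h
  exact h

end Jaux

set_option maxHeartbeats 2000000 in
/-- Suppose `supₙ (aₙ + |bₙ|) < ∞` and let `J` be the Jacobi operator on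
`ℓ²` (indexed so that coordinate `k : ℕ` is the physical index `k+1`), i.e.
`(Ju)ₙ = aₙ uₙ₊₁ + bₙ uₙ + aₙ₋₁ uₙ₋₁` with the convention `a₀u₀ = 0`. Then
`a₋‖u‖² ≤ ⟨u, Ju⟩ ≤ a₊‖u‖²` for all `u ∈ ℓ²` if and only if for every `ℓ ≥ 1`,
`P_ℓ(a₊) > 0` and `(−1)^ℓ P_ℓ(a₋) > 0`. -/
theorem jacobi_form_bounds_iff_monicP_pos (a b : ℕ → ℝ) (ha : ∀ n, 1 ≤ n → 0 < a n)
    (C : ℝ) (hC : ∀ n, 1 ≤ n → a n + |b n| ≤ C) (am ap : ℝ) (h : am ≤ ap) :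
    (∀ u : lp (fun _ : ℕ => ℝ) 2,
        am * ‖u‖ ^ 2 ≤
          (∑' k : ℕ, u k *
            (a (k + 1) * u (k + 1) + b (k + 1) * u k +
              if k = 0 then 0 else a k * u (k - 1))) ∧
        (∑' k : ℕ, u k *
            (a (k + 1) * u (k + 1) + b (k + 1) * u k +
              if k = 0 then 0 else a k * u (k - 1))) ≤ ap * ‖u‖ ^ 2) ↔
      (∀ ℓ : ℕ, 1 ≤ ℓ → 0 < monicP a b ℓ ap ∧ 0 < (-1 : ℝ) ^ ℓ * monicP a b ℓ am) := by
  classical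
  have hC0 : 0 < C := lt_of_lt_of_le (ha 1 le_rfl)
    (le_trans (le_add_of_nonneg_right (abs_nonneg _)) (hC 1 le_rfl))
  have haC : ∀ n, 1 ≤ n → a n ≤ C := fun n hn =>
    le_trans (le_add_of_nonneg_right (abs_nonneg _)) (hC n hn)
  have hbC : ∀ n, 1 ≤ n → |b n| ≤ C := fun n hn =>
    le_trans (le_add_of_nonneg_left (ha n hn).le) (hC n hn)
  have hsqone : ∀ k : ℕ, ((-1 : ℝ) ^ k) * ((-1 : ℝ) ^ k) = 1 := by
    intro k
    rw [← pow_add, show k + k = 2 * k by ring, pow_mul, neg_one_sq, one_pow]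
  have hcross_pred : ∀ (n : ℕ) (v : ℕ → ℝ), v n = 0 →
      Jaux.cross a n v = Jaux.cross a (n - 1) v := by
    intro n v hvn
    rcases n with _ | j
    · rfl
    · show Jaux.cross a (j + 1) v = Jaux.cross a j v
      rw [Jaux.cross, Finset.sum_range_succ, hvn]
      simp [Jaux.cross]
  constructor
  · -- (i) → (ii)
    intro H ℓ hℓ
    have key : ∀ (n : ℕ) (v : ℕ → ℝ), (∀ j, n ≤ j → v j = 0) →
        am * (∑ k ∈ Finset.range n, v k ^ 2) ≤ Jaux.Tf a b v n ∧
          Jaux.Tf a b v n ≤ ap * (∑ k ∈ Finset.range n, v k ^ 2) := by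
      intro n v hsupp
      have hmem : Memℓp v 2 := by
        apply memℓp_gen
        apply summable_of_ne_finset_zero (s := Finset.range n)
        intro j hj
        rw [hsupp j (by simpa using hj), norm_zero, Real.zero_rpow (by norm_num)]
      set U : lp (fun _ : ℕ => ℝ) 2 := ⟨v, hmem⟩ with hUdef
      have hUcoe : ∀ k, (U k : ℝ) = v k := fun k => rfl
      have htsum : (∑' k : ℕ, U k * (a (k + 1) * U (k + 1) + b (k + 1) * U k +
          if k = 0 then 0 else a k * U (k - 1))) = Jaux.Tf a b v n := by
        have h1 : (∑' k : ℕ, U k * (a (k + 1) * U (k + 1) + b (k + 1) * U k +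
            if k = 0 then 0 else a k * U (k - 1)))
            = ∑ k ∈ Finset.range n, U k * (a (k + 1) * U (k + 1) + b (k + 1) * U k +
              if k = 0 then 0 else a k * U (k - 1)) := by
          apply tsum_eq_sum
          intro j hj
          rw [hUcoe j, hsupp j (by simpa using hj)]
          ring
        rw [h1]
        rfl
      have hnorm : ‖U‖ ^ 2 = ∑ k ∈ Finset.range n, v k ^ 2 := by
        rw [Jaux.norm_sq_eq U]
        apply tsum_eq_sum
        intro j hj
        rw [hUcoe j, hsupp j (by simpa using hj)]
        ring
      have hHU := H U
      rw [htsum, hnorm] at hHU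
      exact hHU
    have hG1 : ∀ (n : ℕ) (v : ℕ → ℝ), (∀ j, n ≤ j → v j = 0) → 0 ≤ Jaux.G a b ap n v := by
      intro n v hsupp
      have h2 := (key n v hsupp).2
      rw [Jaux.Tf_eq] at h2
      have hcr := hcross_pred n v (hsupp n le_rfl)
      rw [Jaux.bridge1]
      linarith
    have hG2 : ∀ (n : ℕ) (w : ℕ → ℝ), (∀ j, n ≤ j → w j = 0) →
        0 ≤ Jaux.G a (fun k => -b k) (-am) n w := by
      intro n w hsupp
      set v : ℕ → ℝ := fun k => (-1 : ℝ) ^ k * w k with hvdef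
      have hsv : ∀ j, n ≤ j → v j = 0 := by
        intro j hj; rw [hvdef]; beta_reduce; rw [hsupp j hj, mul_zero]
      have hw : w = fun k => (-1 : ℝ) ^ k * v k := by
        funext k
        rw [hvdef]
        beta_reduce
        rw [← mul_assoc, hsqone k, one_mul]
      have h1 := (key n v hsv).1
      rw [Jaux.Tf_eq] at h1
      have hcr := hcross_pred n v (hsv n le_rfl)
      rw [hw, Jaux.bridge2]
      linarith
    refine ⟨Jaux.monicP_pos_of_G_nonneg ha ap hG1 ℓ hℓ, ?_⟩
    have h2 := Jaux.monicP_pos_of_G_nonneg (b := fun k => -b k) ha (-am) hG2 ℓ hℓ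
    rwa [Jaux.monicP_neg ha] at h2
  · -- (ii) → (i)
    intro hP u
    have hPpos : ∀ ℓ, 1 ≤ ℓ → 0 < monicP a b ℓ ap := fun ℓ hℓ => (hP ℓ hℓ).1
    have hPneg : ∀ ℓ, 1 ≤ ℓ → 0 < monicP a (fun k => -b k) ℓ (-am) := by
      intro ℓ hℓ
      rw [Jaux.monicP_neg ha]
      exact (hP ℓ hℓ).2
    set f : ℕ → ℝ := fun k => u k * (a (k + 1) * u (k + 1) + b (k + 1) * u k +
      if k = 0 then 0 else a k * u (k - 1)) with hfdef
    have hsq : Summable (fun k => (u k : ℝ) ^ 2) := Jaux.summable_sq u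
    have hsq1 : Summable (fun k => (u (k + 1) : ℝ) ^ 2) := (summable_nat_add_iff 1).2 hsq
    have hsqm : Summable (fun k => (u (k - 1) : ℝ) ^ 2) := by
      apply (summable_nat_add_iff 1).1
      simpa using hsq
    have habs : ∀ k, |f k| ≤ C * (2 * (u k : ℝ) ^ 2 + u (k + 1) ^ 2 + u (k - 1) ^ 2) := by
      intro k
      rw [hfdef]
      beta_reduce
      have hb1 : |b (k + 1)| ≤ C := hbC (k + 1) (by omega)
      have ha1 : a (k + 1) ≤ C := haC (k + 1) (by omega)
      have ha1' : 0 < a (k + 1) := ha (k + 1) (by omega)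
      have htri : |(u k : ℝ) * (a (k + 1) * u (k + 1) + b (k + 1) * u k +
            if k = 0 then 0 else a k * u (k - 1))|
          ≤ |(u k : ℝ)| * (C * |(u (k + 1) : ℝ)| + C * |(u k : ℝ)| + C * |(u (k - 1) : ℝ)|) := by
        rw [abs_mul]
        apply mul_le_mul_of_nonneg_left _ (abs_nonneg _)
        apply le_trans (abs_add_le _ _)
        apply add_le_add
        · apply le_trans (abs_add_le _ _)
          apply add_le_add
          · rw [abs_mul]
            apply mul_le_mul_of_nonneg_right _ (abs_nonneg _)
            rw [abs_of_pos ha1']; exact ha1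
          · rw [abs_mul]
            exact mul_le_mul_of_nonneg_right hb1 (abs_nonneg _)
        · rcases Nat.eq_zero_or_pos k with rfl | hk
          · simp
            positivity
          · rw [if_neg (by omega), abs_mul]
            apply mul_le_mul_of_nonneg_right _ (abs_nonneg _)
            rw [abs_of_pos (ha k hk)]; exact haC k hk
      apply le_trans htri
      have e1 : (u k : ℝ) ^ 2 = |(u k : ℝ)| ^ 2 := (sq_abs _).symm
      have e2 : (u (k + 1) : ℝ) ^ 2 = |(u (k + 1) : ℝ)| ^ 2 := (sq_abs _).symm
      have e3 : (u (k - 1) : ℝ) ^ 2 = |(u (k - 1) : ℝ)| ^ 2 := (sq_abs _).symm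
      rw [e1, e2, e3]
      nlinarith [sq_nonneg (|(u k : ℝ)| - |(u (k + 1) : ℝ)|),
        sq_nonneg (|(u k : ℝ)| - |(u (k - 1) : ℝ)|),
        abs_nonneg ((u k : ℝ)), abs_nonneg ((u (k + 1) : ℝ)), abs_nonneg ((u (k - 1) : ℝ)), hC0]
    have hsumf : Summable f := by
      apply Summable.of_abs
      apply Summable.of_nonneg_of_le (fun k => abs_nonneg _) habs
      exact (((hsq.mul_left 2).add hsq1).add hsqm).mul_left C
    have hT : Filter.Tendsto (fun n => ∑ k ∈ Finset.range n, f k)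
        Filter.atTop (nhds (∑' k, f k)) := hsumf.hasSum.tendsto_sum_nat
    have hN : Filter.Tendsto (fun n => ∑ k ∈ Finset.range n, (u k : ℝ) ^ 2)
        Filter.atTop (nhds (‖u‖ ^ 2)) := by
      rw [Jaux.norm_sq_eq u]
      exact hsq.hasSum.tendsto_sum_nat
    set ε : ℕ → ℝ := fun n => a n * u (n - 1) * u n with hεdef
    have hε : Filter.Tendsto ε Filter.atTop (nhds 0) := by
      rw [tendsto_zero_iff_abs_tendsto_zero]
      have h1 : Filter.Tendsto (fun n => (u n : ℝ) ^ 2) Filter.atTop (nhds 0) :=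
        hsq.tendsto_atTop_zero
      have h2 : Filter.Tendsto (fun n => (u (n - 1) : ℝ) ^ 2) Filter.atTop (nhds 0) :=
        hsqm.tendsto_atTop_zero
      have hB : Filter.Tendsto (fun n => C * ((u (n - 1) : ℝ) ^ 2 + u n ^ 2))
          Filter.atTop (nhds 0) := by
        have := (h2.add h1).const_mul C
        simpa using this
      apply squeeze_zero' (Filter.Eventually.of_forall fun n => abs_nonneg _) _ hB
      filter_upwards [Filter.eventually_ge_atTop 1] with n hn
      show |ε n| ≤ C * ((u (n - 1) : ℝ) ^ 2 + u n ^ 2)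
      rw [hεdef]
      beta_reduce
      have han : 0 < a n := ha n hn
      have hanC : a n ≤ C := haC n hn
      rw [abs_mul, abs_mul, abs_of_pos han]
      have e2 : (u (n - 1) : ℝ) ^ 2 = |(u (n - 1) : ℝ)| ^ 2 := (sq_abs _).symm
      have e3 : (u n : ℝ) ^ 2 = |(u n : ℝ)| ^ 2 := (sq_abs _).symm
      rw [e2, e3]
      set x := |(u (n - 1) : ℝ)| with hx
      set y := |(u n : ℝ)| with hy
      have hx0 : 0 ≤ x := abs_nonneg _
      have hy0 : 0 ≤ y := abs_nonneg _
      have h1 : a n * x * y ≤ C * (x * y) := by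
        rw [mul_assoc]
        exact mul_le_mul_of_nonneg_right hanC (mul_nonneg hx0 hy0)
      have h2 : x * y ≤ x ^ 2 + y ^ 2 := by nlinarith [sq_nonneg (x - y)]
      calc a n * x * y ≤ C * (x * y) := h1
      _ ≤ C * (x ^ 2 + y ^ 2) := mul_le_mul_of_nonneg_left h2 hC0.le
    have hineq : ∀ᶠ n in Filter.atTop,
        am * (∑ k ∈ Finset.range n, (u k : ℝ) ^ 2) ≤ (∑ k ∈ Finset.range n, f k) - ε n ∧
        (∑ k ∈ Finset.range n, f k) - ε n ≤ ap * (∑ k ∈ Finset.range n, (u k : ℝ) ^ 2) := by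
      filter_upwards [Filter.eventually_ge_atTop 1] with n hn
      obtain ⟨m, rfl⟩ : ∃ m, n = m + 1 := ⟨n - 1, by omega⟩
      set v : ℕ → ℝ := fun k => if k < m + 1 then (u k : ℝ) else 0 with hvdef
      have hvk : ∀ k, k < m + 1 → v k = u k := by
        intro k hk; rw [hvdef]; beta_reduce; rw [if_pos hk]
      have hvn : v (m + 1) = 0 := by rw [hvdef]; beta_reduce; rw [if_neg (by omega)]
      have hNv : (∑ k ∈ Finset.range (m + 1), v k ^ 2)
          = ∑ k ∈ Finset.range (m + 1), (u k : ℝ) ^ 2 := by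
        refine Finset.sum_congr rfl fun k hk => ?_
        rw [hvk k (Finset.mem_range.1 hk)]
      have hDv : Jaux.diagB b (m + 1) v = Jaux.diagB b (m + 1) (fun k => (u k : ℝ)) := by
        refine Finset.sum_congr rfl fun k hk => ?_
        rw [hvk k (Finset.mem_range.1 hk)]
      have hCv : Jaux.cross a (m + 1) v = Jaux.cross a m (fun k => (u k : ℝ)) := by
        rw [hcross_pred (m + 1) v hvn]
        refine Finset.sum_congr rfl fun k hk => ?_
        have hk' := Finset.mem_range.1 hk
        rw [hvk k (by omega), hvk (k + 1) (by omega)]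
      have hfT : (∑ k ∈ Finset.range (m + 1), f k)
          = Jaux.Tf a b (fun k => (u k : ℝ)) (m + 1) := rfl
      have hTexp := Jaux.Tf_eq (a := a) (b := b) (fun k => (u k : ℝ)) (m + 1)
      have hcsucc : Jaux.cross a (m + 1) (fun k => (u k : ℝ))
          = Jaux.cross a m (fun k => (u k : ℝ)) + a (m + 1) * u m * u (m + 1) :=
        Finset.sum_range_succ _ _
      have hεn : ε (m + 1) = a (m + 1) * u m * u (m + 1) := by
        rw [hεdef]
        beta_reduce
        norm_num
      have hup : 0 ≤ Jaux.G a b ap (m + 1) v :=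
        Jaux.G_nonneg ha ap hPpos (m + 1) v hvn
      rw [Jaux.bridge1, hNv, hDv, hCv] at hup
      have hw : ∀ j, (m + 1) ≤ j → ((fun k => (-1 : ℝ) ^ k * v k) j) = 0 := by
        intro j hj
        beta_reduce
        rw [hvdef]
        beta_reduce
        rw [if_neg (by omega), mul_zero]
      have hlo : 0 ≤ Jaux.G a (fun k => -b k) (-am) (m + 1) (fun k => (-1 : ℝ) ^ k * v k) :=
        Jaux.G_nonneg ha (-am) hPneg (m + 1) _ (hw (m + 1) le_rfl)
      rw [Jaux.bridge2, hNv, hDv, hCv] at hlo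
      rw [hfT, hTexp, hεn]
      simp only [Nat.add_sub_cancel]
      constructor
      · linarith [hcsucc]
      · linarith [hcsucc]
    constructor
    · have hlim1 : Filter.Tendsto (fun n => am * ∑ k ∈ Finset.range n, (u k : ℝ) ^ 2)
          Filter.atTop (nhds (am * ‖u‖ ^ 2)) := hN.const_mul am
      have hlim2 : Filter.Tendsto (fun n => (∑ k ∈ Finset.range n, f k) - ε n)
          Filter.atTop (nhds ((∑' k, f k) - 0)) := hT.sub hε
      rw [sub_zero] at hlim2
      exact le_of_tendsto_of_tendsto hlim1 hlim2 (hineq.mono fun n hn => hn.1)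
    · have hlim1 : Filter.Tendsto (fun n => ap * ∑ k ∈ Finset.range n, (u k : ℝ) ^ 2)
          Filter.atTop (nhds (ap * ‖u‖ ^ 2)) := hN.const_mul ap
      have hlim2 : Filter.Tendsto (fun n => (∑ k ∈ Finset.range n, f k) - ε n)
          Filter.atTop (nhds ((∑' k, f k) - 0)) := hT.sub hε
      rw [sub_zero] at hlim2
      exact le_of_tendsto_of_tendsto hlim2 hlim1 (hineq.mono fun n hn => hn.2)
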